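/- arXiv:2308.02444 — 2 statements merged into one kernel-verified Lean document; each statement's English description precedes it below -/
import Mathlib

section
/- There exists a positive real number c₁₄ such that the following holds. Let y be a non-decreasing function from the positive real numbers to the real numbers with y(x) ≥ 3 for all x > 0, let n_1 < n_2 < n_3 < ... be the increasing sequence of all positive integers n with P(n) ≤ y(n), and let X be a real number with X > c₁₄ and y(√X) ≤ (log X)^{1/4}. Then there is an index i such that n_i and n_{i+1} both lie in the interval (√X, X] and n_{i+1} − n_i < 3·n_i·(s·log y(n_i))^s / (log n_i)^{r'−1}, where r' = π(y(√(n_i))) and s = π(y(n_i)). -/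
open Real Filter

/-- Greatest prime factor of `n`, with the convention `P 0 = P 1 = 1`. -/
def maxPrimeFactor (n : ℕ) : ℕ := max 1 (n.primeFactors.sup id)

/-- Prime counting function `π` for a real argument: the number of primes `p ≤ x`. -/
noncomputable def primePi (x : ℝ) : ℕ := Nat.primeCounting ⌊x⌋₊

open Finset
open scoped Nat

/-!
Write `L = log X`, `y₀ = y(√X)`, `r = π(y₀)` and `w = log y₀`. By unique factorisation, the
`t`-multisets of `{1} ∪ {odd primes ≤ y₀}`, `t = ⌊L / 2w⌋`, have distinct products; these are
`C(r - 1 + t, t) ≥ (L / 2w)^(r-1) / (r-1)!` odd `y₀`-smooth numbers `m ≤ y₀^t ≤ √X`. Moving each `m`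
into `(√X, 2√X]` by a power of two and then multiplying by `2^c`, `c < M ≈ L / (2 log 2)`, gives
(with `2^k k! ≤ (k+1)^k`) `N ≥ 2 L^r / (3 (r w)^r)` distinct `y₀`-smooth numbers in `(√X, X]`, all
terms of the sequence since `y` is non-decreasing. By pigeonhole two of them, hence two consecutive
terms `n_i < n_(i+1)`, have logarithms closer than `(L/2)/(N-1)`, so that
`n_(i+1) - n_i < 3 n_i (r w)^r / L^(r-1)`. The hypothesis `y₀ ≤ L^(1/4)` gives `(r w)^r ≤ L^(r-1)`,
which keeps `(L/2)/(N-1) ≤ 1`. Finally the bound only grows when `r` and `w` are evaluated at `n_i`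
and `L` is replaced by `log n_i ≥ L/2`, while `π(y(√n_i)) ≤ r`.
-/

lemma two_mul_pow_le_add_one_pow {m : ℕ} (hm : 1 ≤ m) : 2 * m ^ m ≤ (m + 1) ^ m := by
  have hm' : (0 : ℝ) < m := by exact_mod_cast hm
  have key := one_add_mul_le_pow (a := (m : ℝ)⁻¹) (by linarith [inv_pos.mpr hm']) m
  rw [mul_inv_cancel₀ hm'.ne', one_add_one_eq_two] at key
  have : (2 : ℝ) * (m : ℝ) ^ m ≤ ((m : ℝ) + 1) ^ m := by
    calc (2 : ℝ) * m ^ m ≤ (1 + (m : ℝ)⁻¹) ^ m * m ^ m := by gcongr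
      _ = ((m : ℝ) + 1) ^ m := by
        rw [← mul_pow, add_mul, inv_mul_cancel₀ hm'.ne', one_mul, add_comm]
  exact_mod_cast this

lemma two_pow_mul_factorial_le_succ_pow (k : ℕ) : 2 ^ k * k ! ≤ (k + 1) ^ k := by
  induction k with
  | zero => simp
  | succ k ih =>
    calc 2 ^ (k + 1) * (k + 1)! = 2 * (k + 1) * (2 ^ k * k !) := by
          rw [Nat.factorial_succ]; ring
      _ ≤ 2 * (k + 1) * (k + 1) ^ k := by gcongr
      _ = 2 * (k + 1) ^ (k + 1) := by ring
      _ ≤ (k + 1 + 1) ^ (k + 1) := two_mul_pow_le_add_one_pow (by omega)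

lemma succ_pow_le_factorial_mul_choose (k t : ℕ) : (t + 1) ^ k ≤ k ! * (k + t).choose t := by
  calc (t + 1) ^ k ≤ (t + 1).ascFactorial k := Nat.pow_succ_le_ascFactorial _ _
    _ = k ! * (k + t).choose t := by
      rw [Nat.ascFactorial_eq_factorial_mul_choose, add_comm t k, Nat.choose_symm_add]

lemma pow_le_succ_mul_pow_mul_choose {L w : ℝ} (hL : 0 ≤ L) (hw : 0 < w) (k : ℕ) :
    L ^ k ≤ ((k + 1) * w) ^ k * ((k + ⌊L / (2 * w)⌋₊).choose ⌊L / (2 * w)⌋₊ : ℕ) := by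
  set t := ⌊L / (2 * w)⌋₊
  have hLt : L ≤ 2 * w * (t + 1) := by
    have := (Nat.lt_floor_add_one (L / (2 * w))).le
    rwa [div_le_iff₀' (by positivity)] at this
  have hfac : (2 : ℝ) ^ k * k ! ≤ (k + 1) ^ k := by
    exact_mod_cast two_pow_mul_factorial_le_succ_pow k
  have hchoose : ((t : ℝ) + 1) ^ k ≤ k ! * (k + t).choose t := by
    exact_mod_cast succ_pow_le_factorial_mul_choose k t
  calc L ^ k ≤ (2 * w * (t + 1)) ^ k := by gcongr
    _ = w ^ k * 2 ^ k * (t + 1) ^ k := by rw [mul_pow, mul_pow]; ring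
    _ ≤ w ^ k * 2 ^ k * (k ! * (k + t).choose t) := by gcongr
    _ = w ^ k * (2 ^ k * k !) * (k + t).choose t := by ring
    _ ≤ w ^ k * (k + 1) ^ k * (k + t).choose t := by gcongr
    _ = ((k + 1) * w) ^ k * ((k + t).choose t : ℕ) := by rw [mul_pow]; ring

lemma Multiset.filter_ne_one_add_replicate (w : Multiset ℕ) :
    w.filter (· ≠ 1) + Multiset.replicate (w.count 1) 1 = w := by
  rw [← Multiset.filter_eq']
  simpa using Multiset.filter_add_not (· ≠ 1) w

lemma Multiset.eq_of_card_eq_of_prod_eq {u v : Multiset ℕ} (hu : ∀ x ∈ u, x = 1 ∨ x.Prime)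
    (hv : ∀ x ∈ v, x = 1 ∨ x.Prime) (hcard : card u = card v) (hprod : u.prod = v.prod) :
    u = v := by
  have hfactors : ∀ w : Multiset ℕ, (∀ x ∈ w, x = 1 ∨ x.Prime) →
      UniqueFactorizationMonoid.normalizedFactors w.prod = w.filter (· ≠ 1) := by
    intro w hw
    conv_lhs => rw [← w.filter_ne_one_add_replicate]
    rw [prod_add, prod_replicate, one_pow, mul_one]
    refine UniqueFactorizationMonoid.normalizedFactors_prod_of_prime fun p hp => ?_
    obtain ⟨hpw, hp1⟩ := mem_filter.mp hp
    exact ((hw p hpw).resolve_left hp1).prime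
  have hfilter : u.filter (· ≠ 1) = v.filter (· ≠ 1) := by
    rw [← hfactors u hu, ← hfactors v hv, hprod]
  have hcount : u.count 1 = v.count 1 := by
    have hu' := congrArg card u.filter_ne_one_add_replicate
    have hv' := congrArg card v.filter_ne_one_add_replicate
    rw [card_add, card_replicate, hfilter] at hu'
    rw [card_add, card_replicate] at hv'
    omega
  rw [← u.filter_ne_one_add_replicate, ← v.filter_ne_one_add_replicate, hfilter, hcount]

lemma exists_finset_prime_products {Q : Finset ℕ} (hQ : ∀ q ∈ Q, q.Prime) {F : ℕ} (hF : 1 ≤ F)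
    (hQF : ∀ q ∈ Q, q ≤ F) (t : ℕ) :
    ∃ S : Finset ℕ, #S = (#Q + t).choose t ∧
      ∀ m ∈ S, m ≤ F ^ t ∧ ∀ p, p.Prime → p ∣ m → p ∈ Q := by
  classical
  -- a `t`-multiset drawn from `{1} ∪ Q` encodes a product of at most `t` primes of `Q`
  let prod : Sym {x // x ∈ insert 1 Q} t → ℕ := fun s => (s.1.map Subtype.val).prod
  have hmem : ∀ s : Sym {x // x ∈ insert 1 Q} t, ∀ x ∈ s.1.map Subtype.val, x = 1 ∨ x ∈ Q :=
    fun s x hx => by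
      obtain ⟨⟨x, hxQ⟩, -, rfl⟩ := Multiset.mem_map.mp hx
      exact mem_insert.mp hxQ
  have hprime : ∀ s : Sym {x // x ∈ insert 1 Q} t, ∀ x ∈ s.1.map Subtype.val, x = 1 ∨ x.Prime :=
    fun s x hx => (hmem s x hx).imp_right (hQ x)
  have hinj : Function.Injective prod := fun s₁ s₂ h => Sym.ext <|
    Multiset.map_injective Subtype.val_injective <|
      Multiset.eq_of_card_eq_of_prod_eq (hprime s₁) (hprime s₂) (by simp) h
  refine ⟨univ.image prod, ?_, ?_⟩
  · have h1Q : 1 ∉ Q := fun h => Nat.not_prime_one (hQ 1 h)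
    rw [card_image_of_injective _ hinj, card_univ, Sym.card_sym_eq_choose, Fintype.card_coe,
      card_insert_of_notMem h1Q, Nat.add_right_comm, Nat.add_sub_cancel]
  · simp only [mem_image, mem_univ, true_and]
    rintro _ ⟨s, rfl⟩
    refine ⟨?_, fun p hp hdvd => ?_⟩
    · have := Multiset.prod_le_pow_card (s.1.map Subtype.val) F fun x hx => by
        rcases hmem s x hx with rfl | hxQ
        exacts [hF, hQF x hxQ]
      simpa [prod] using this
    · obtain ⟨x, hx, hpx⟩ := hp.prime.exists_mem_multiset_dvd hdvd
      rcases hmem s x hx with rfl | hxQ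
      · exact absurd (Nat.dvd_one.mp hpx) hp.ne_one
      · rwa [(Nat.prime_dvd_prime_iff_eq hp (hQ x hxQ)).mp hpx]

lemma factorization_two_pow_mul_odd (a : ℕ) {m : ℕ} (hm : Odd m) :
    (2 ^ a * m).factorization 2 = a := by
  rw [Nat.factorization_mul (by positivity) hm.pos.ne', Nat.Prime.factorization_pow Nat.prime_two,
    Finsupp.add_apply, Finsupp.single_eq_same,
    Nat.factorization_eq_zero_of_not_dvd hm.not_two_dvd_nat, add_zero]

lemma eq_of_two_pow_mul_odd_eq {a b m m' : ℕ} (hm : Odd m) (hm' : Odd m')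
    (h : 2 ^ a * m = 2 ^ b * m') : a = b ∧ m = m' := by
  have hab : a = b := by
    rw [← factorization_two_pow_mul_odd a hm, ← factorization_two_pow_mul_odd b hm', h]
  subst hab
  exact ⟨rfl, Nat.eq_of_mul_eq_mul_left (by positivity) h⟩

lemma exists_two_pow_mul_mem_Ioc {e m : ℕ} (hm : 0 < m) (hme : m ≤ e) :
    ∃ j, e < 2 ^ j * m ∧ 2 ^ j * m ≤ 2 * e := by
  have hem : e / m ≠ 0 := (Nat.div_pos hme hm).ne'
  refine ⟨Nat.log 2 (e / m) + 1, ?_, ?_⟩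
  · exact (Nat.div_lt_iff_lt_mul hm).mp (Nat.lt_pow_succ_log_self one_lt_two _)
  · rw [pow_succ, mul_comm _ 2, mul_assoc]
    exact Nat.mul_le_mul_left 2 ((Nat.le_div_iff_mul_le hm).mp (Nat.pow_log_le_self 2 hem))

lemma exists_finset_two_pow_mul {S : Finset ℕ} {e : ℕ} (hS : ∀ m ∈ S, Odd m ∧ m ≤ e) (M : ℕ) :
    ∃ T : Finset ℕ, #T = #S * M ∧
      ∀ v ∈ T, e < v ∧ v ≤ 2 ^ M * e ∧ ∃ j, ∃ m ∈ S, v = 2 ^ j * m := by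
  choose! j hj using fun m hm => exists_two_pow_mul_mem_Ioc (hS m hm).1.pos (hS m hm).2
  let f : ℕ × ℕ → ℕ := fun p => 2 ^ (j p.1 + p.2) * p.1
  have hinj : Set.InjOn f ↑(S ×ˢ range M) := by
    rintro ⟨m, c⟩ hmc ⟨m', c'⟩ hmc' h
    simp only [mem_coe, mem_product, mem_range] at hmc hmc'
    obtain ⟨hexp, rfl⟩ := eq_of_two_pow_mul_odd_eq (hS m hmc.1).1 (hS m' hmc'.1).1 h
    simp only [Prod.mk.injEq, true_and]
    simp only at hexp
    omega
  refine ⟨(S ×ˢ range M).image f, by rw [card_image_of_injOn hinj, card_product, card_range], ?_⟩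
  simp only [mem_image, mem_product, mem_range, Prod.exists]
  rintro _ ⟨m, c, ⟨hm, hc⟩, rfl⟩
  obtain ⟨hlo, hhi⟩ := hj m hm
  refine ⟨?_, ?_, j m + c, m, hm, rfl⟩
  · calc e < 2 ^ j m * m := hlo
      _ ≤ 2 ^ (j m + c) * m := by gcongr <;> omega
  · calc 2 ^ (j m + c) * m = 2 ^ c * (2 ^ j m * m) := by ring
      _ ≤ 2 ^ (M - 1) * (2 * e) := by gcongr <;> omega
      _ = 2 ^ M * e := by rw [← mul_assoc, ← pow_succ, Nat.sub_add_cancel (by omega)]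

lemma maxPrimeFactor_le {v F : ℕ} (hF : 1 ≤ F) (h : ∀ p, p.Prime → p ∣ v → p ≤ F) :
    maxPrimeFactor v ≤ F :=
  max_le hF <| Finset.sup_le fun p hp => h p (Nat.prime_of_mem_primeFactors hp)
    (Nat.dvd_of_mem_primeFactors hp)

lemma exists_finset_smooth {F t : ℕ} (hF : 2 ≤ F) {E : ℝ} (hFt : (F : ℝ) ^ t ≤ E) (M : ℕ) :
    ∃ T : Finset ℕ, #T = (Nat.primeCounting F - 1 + t).choose t * M ∧
      ∀ v ∈ T, E < v ∧ (v : ℝ) ≤ 2 ^ M * E ∧ maxPrimeFactor v ≤ F := by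
  set Q := (Nat.primesLE F).erase 2
  have hQ : ∀ q ∈ Q, q.Prime := fun q hq => Nat.prime_of_mem_primesLE (mem_of_mem_erase hq)
  have hQF : ∀ q ∈ Q, q ≤ F := fun q hq => Nat.le_of_mem_primesLE (mem_of_mem_erase hq)
  have hcard : #Q = Nat.primeCounting F - 1 := by
    rw [card_erase_of_mem (Nat.mem_primesLE.mpr ⟨hF, Nat.prime_two⟩),
      Nat.primesLE_card_eq_primeCounting]
  obtain ⟨S, hScard, hS⟩ := exists_finset_prime_products hQ (by omega) hQF t
  have hE : (0 : ℝ) ≤ E := le_trans (by positivity) hFt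
  have hSodd : ∀ m ∈ S, Odd m ∧ m ≤ ⌊E⌋₊ := fun m hm => by
    refine ⟨Nat.not_even_iff_odd.mp fun h2 => ?_, Nat.le_floor ?_⟩
    · exact notMem_erase 2 _ ((hS m hm).2 2 Nat.prime_two h2.two_dvd)
    · exact le_trans (by exact_mod_cast (hS m hm).1) hFt
  obtain ⟨T, hTcard, hT⟩ := exists_finset_two_pow_mul hSodd M
  refine ⟨T, by rw [hTcard, hScard, hcard], fun v hv => ?_⟩
  obtain ⟨hlo, hhi, j, m, hm, rfl⟩ := hT v hv
  refine ⟨?_, ?_, maxPrimeFactor_le (by omega) fun p hp hdvd => ?_⟩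
  · exact (Nat.lt_floor_add_one E).trans_le (by exact_mod_cast hlo)
  · calc ((2 ^ j * m : ℕ) : ℝ) ≤ ((2 ^ M * ⌊E⌋₊ : ℕ) : ℝ) := by exact_mod_cast hhi
      _ ≤ 2 ^ M * E := by push_cast; gcongr; exact Nat.floor_le hE
  · rcases (Nat.Prime.dvd_mul hp).mp hdvd with h2 | hpm
    · rwa [(Nat.prime_dvd_prime_iff_eq hp Nat.prime_two).mp (hp.dvd_of_dvd_pow h2)]
    · exact hQF p ((hS m hm).2 p hp hpm)

lemma exists_two_pow_le_exp_half {L : ℝ} (hL : 30 ≤ L) :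
    ∃ M : ℕ, 2 * L / 3 ≤ M ∧ (2 : ℝ) ^ M ≤ exp (L / 2) := by
  have hlog2 : 0 < log 2 := log_pos one_lt_two
  have hlog2' : log 2 < 0.7 := log_two_lt_d9.trans (by norm_num)
  refine ⟨⌊L / (2 * log 2)⌋₊, ?_, ?_⟩
  · have h := Nat.lt_floor_add_one (L / (2 * log 2))
    rw [div_lt_iff₀ (by positivity)] at h
    nlinarith
  · rw [← exp_log two_pos, ← exp_nat_mul, exp_log two_pos]
    refine exp_le_exp.mpr ?_
    have h := Nat.floor_le (a := L / (2 * log 2)) (by positivity)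
    rw [le_div_iff₀ (by positivity)] at h
    linarith

lemma exists_finset_smooth_Ioc {L w : ℝ} (hL : 30 ≤ L) (hw : 1 ≤ w) {F : ℕ} (hF : 2 ≤ F)
    (hFw : (F : ℝ) ≤ exp w) :
    ∃ T : Finset ℕ, L ^ Nat.primeCounting F ≤
        3 / 2 * (Nat.primeCounting F * w) ^ Nat.primeCounting F * #T ∧
      ∀ v ∈ T, exp (L / 2) < v ∧ (v : ℝ) ≤ exp L ∧ maxPrimeFactor v ≤ F := by
  set r := Nat.primeCounting F
  set t := ⌊L / (2 * w)⌋₊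
  have hr : 1 ≤ r := Nat.monotone_primeCounting hF
  have hFt : (F : ℝ) ^ t ≤ exp (L / 2) := by
    calc (F : ℝ) ^ t ≤ exp w ^ t := by gcongr
      _ = exp (t * w) := by rw [← exp_nat_mul]
      _ ≤ exp (L / 2) := by
        refine exp_le_exp.mpr ?_
        have h := Nat.floor_le (a := L / (2 * w)) (by positivity)
        rw [le_div_iff₀ (by positivity)] at h
        linarith
  obtain ⟨M, hLM, hM⟩ := exists_two_pow_le_exp_half hL
  obtain ⟨T, hTcard, hT⟩ := exists_finset_smooth hF hFt M
  refine ⟨T, ?_, fun v hv => ?_⟩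
  · have hchoose :=
      pow_le_succ_mul_pow_mul_choose (L := L) (w := w) (by linarith) (by linarith) (r - 1)
    rw [Nat.cast_sub hr, Nat.cast_one, sub_add_cancel] at hchoose
    have hrw : 1 ≤ (r : ℝ) * w := one_le_mul_of_one_le_of_one_le (by exact_mod_cast hr) hw
    calc L ^ r = L ^ (r - 1) * L := by rw [← pow_succ, Nat.sub_add_cancel hr]
      _ ≤ (r * w) ^ (r - 1) * ((r - 1 + t).choose t : ℕ) * (3 / 2 * M) :=
        mul_le_mul hchoose (by linarith) (by linarith) (by positivity)
      _ ≤ (r * w) ^ r * ((r - 1 + t).choose t : ℕ) * (3 / 2 * M) := by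
        gcongr
        exact Nat.sub_le r 1
      _ = 3 / 2 * (r * w) ^ r * #T := by rw [hTcard]; push_cast; ring
  · obtain ⟨hlo, hhi, hsmooth⟩ := hT v hv
    refine ⟨hlo, hhi.trans ?_, hsmooth⟩
    calc (2 : ℝ) ^ M * exp (L / 2) ≤ exp (L / 2) * exp (L / 2) := by gcongr
      _ = exp L := by rw [← exp_add, add_halves]

lemma Finset.exists_ne_sub_lt_of_mem_Ioc {ι : Type*} (T : Finset ι) (f : ι → ℝ) {A B : ℝ}
    (hf : ∀ i ∈ T, f i ∈ Set.Ioc A B) (hT : 2 ≤ #T) :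
    ∃ a ∈ T, ∃ b ∈ T, a ≠ b ∧ f a ≤ f b ∧ f b - f a < (B - A) / (#T - 1) := by
  set δ := (B - A) / (#T - 1)
  obtain ⟨i, hi⟩ := card_pos.mp (by omega : 0 < #T)
  have hT' : (2 : ℝ) ≤ #T := by exact_mod_cast hT
  have hδ : 0 < δ := div_pos (sub_pos.mpr ((hf i hi).1.trans_le (hf i hi).2)) (by linarith)
  -- the boxes `(A + (k - 1) δ, A + k δ]`, `1 ≤ k ≤ #T - 1`, cover `(A, B]`
  let box : ι → ℕ := fun i => ⌈(f i - A) / δ⌉₊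
  have hbox : ∀ i ∈ T, box i ∈ Icc 1 (#T - 1) := fun i hi => by
    obtain ⟨hA, hB⟩ := hf i hi
    refine mem_Icc.mpr ⟨Nat.one_le_iff_ne_zero.mpr (Nat.ceil_pos.mpr ?_).ne', Nat.ceil_le.mpr ?_⟩
    · exact div_pos (sub_pos.mpr hA) hδ
    · rw [div_le_iff₀ hδ, Nat.cast_sub (by omega), Nat.cast_one]
      simp only [δ]
      rw [mul_div_cancel₀ _ (by linarith : (#T : ℝ) - 1 ≠ 0)]
      linarith
  have hsame : ∀ a ∈ T, ∀ b, box a = box b → f b - f a < δ := fun a ha b hab => by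
    have hb : (f b - A) / δ ≤ box b := Nat.le_ceil _
    have ha' : (box a : ℝ) < (f a - A) / δ + 1 :=
      Nat.ceil_lt_add_one (div_nonneg (sub_nonneg.mpr (hf a ha).1.le) hδ.le)
    rw [hab] at ha'
    have : (f b - A) / δ - (f a - A) / δ < 1 := by linarith
    rwa [← sub_div, sub_sub_sub_cancel_right, div_lt_one hδ] at this
  obtain ⟨a, ha, b, hb, hne, hab⟩ :=
    exists_ne_map_eq_of_card_lt_of_maps_to (by rw [Nat.card_Icc]; omega) hbox
  rcases le_total (f a) (f b) with hle | hle
  · exact ⟨a, ha, b, hb, hne, hle, hsame a ha b hab⟩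
  · exact ⟨b, hb, a, ha, hne.symm, hle, hsame b hb a hab.symm⟩

lemma StrictMonoOn.lt_succ_le {α : Type*} [Preorder α] {n : ℕ → α}
    (hn : StrictMonoOn n (Set.Ici 1)) {i i' : ℕ} (hi : 1 ≤ i) (hi' : 1 ≤ i') (h : n i < n i') :
    n i < n (i + 1) ∧ n (i + 1) ≤ n i' := by
  have hii' : i < i' := (hn.lt_iff_lt hi hi').mp h
  exact ⟨hn hi (by simp) (Nat.lt_succ_self i),
    (hn.le_iff_le (by simp) hi').mpr hii'⟩

lemma exists_consecutive_lt_mul_exp {n : ℕ → ℕ} (hn : StrictMonoOn n (Set.Ici 1))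
    {T : Finset ℕ} (hTn : ∀ v ∈ T, ∃ i, 1 ≤ i ∧ n i = v) {A B : ℝ} (hA : 0 < A)
    (hT : ∀ v ∈ T, A < v ∧ (v : ℝ) ≤ B) (hcard : 2 ≤ #T) :
    ∃ i, 1 ≤ i ∧ A < n i ∧ n i < n (i + 1) ∧ (n (i + 1) : ℝ) ≤ B ∧
      (n (i + 1) : ℝ) < n i * exp ((log B - log A) / (#T - 1)) := by
  have hpos : ∀ v ∈ T, (0 : ℝ) < v := fun v hv => hA.trans (hT v hv).1
  obtain ⟨a, ha, b, hb, hne, hab, hlog⟩ := T.exists_ne_sub_lt_of_mem_Ioc (fun v => log v)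
    (fun v hv => ⟨log_lt_log hA (hT v hv).1, log_le_log (hpos v hv) (hT v hv).2⟩) hcard
  have hab : a < b :=
    lt_of_le_of_ne (by exact_mod_cast (log_le_log_iff (hpos a ha) (hpos b hb)).mp hab) hne
  obtain ⟨i, hi, rfl⟩ := hTn a ha
  obtain ⟨i', hi', rfl⟩ := hTn b hb
  obtain ⟨hlt, hle⟩ := hn.lt_succ_le hi hi' hab
  have hle' : (n (i + 1) : ℝ) ≤ n i' := by exact_mod_cast hle
  refine ⟨i, hi, (hT _ ha).1, hlt, hle'.trans (hT _ hb).2, ?_⟩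
  calc (n (i + 1) : ℝ) ≤ n i' := hle'
    _ = exp (log (n i')) := (exp_log (hpos _ hb)).symm
    _ < exp (log (n i) + (log B - log A) / (#T - 1)) := exp_lt_exp.mpr (by linarith)
    _ = n i * exp ((log B - log A) / (#T - 1)) := by rw [exp_add, exp_log (hpos _ ha)]

lemma exp_half_div_sub_one_le {L D N : ℝ} (hL : 6 ≤ L) (hD0 : 0 ≤ D) (hD1 : D ≤ 1)
    (hN : L ≤ 3 / 2 * D * N) : exp (L / 2 / (N - 1)) - 1 ≤ 3 * D := by
  have hNpos : 0 < N := by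
    by_contra! h
    nlinarith [mul_nonpos_of_nonneg_of_nonpos hD0 h]
  have hDN : L ≤ 3 / 2 * N := by nlinarith [mul_le_mul_of_nonneg_right hD1 hNpos.le]
  have hN1 : 0 < N - 1 := by linarith
  have hx0 : 0 ≤ L / 2 / (N - 1) := by positivity
  have hx1 : L / 2 / (N - 1) ≤ 1 := by rw [div_le_one hN1]; linarith
  have hexp := abs_exp_sub_one_le (x := L / 2 / (N - 1)) (by rwa [abs_of_nonneg hx0])
  rw [abs_of_nonneg hx0] at hexp
  calc exp (L / 2 / (N - 1)) - 1 ≤ 2 * (L / 2 / (N - 1)) := (le_abs_self _).trans hexp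
    _ = L / (N - 1) := by ring
    _ ≤ 3 * D := by
      rw [div_le_iff₀ hN1]
      nlinarith [mul_nonneg hD0 (by linarith : (0 : ℝ) ≤ N - 2)]

lemma sq_pow_le_pow_pred_of_pow_four_le {a L : ℝ} {r : ℕ} (hL : 1 ≤ L)
    (haL : a ^ 4 ≤ L) (hr : 2 ≤ r) : (a ^ 2) ^ r ≤ L ^ (r - 1) := by
  refine (pow_le_pow_iff_left₀ (by positivity) (by positivity) two_ne_zero).mp ?_
  calc ((a ^ 2) ^ r) ^ 2 = (a ^ 4) ^ r := by rw [← pow_mul, ← pow_mul]; ring_nf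
    _ ≤ L ^ r := by gcongr
    _ ≤ L ^ (2 * (r - 1)) := pow_le_pow_right₀ hL (by omega)
    _ = (L ^ (r - 1)) ^ 2 := by rw [← pow_mul, mul_comm]

lemma pow_div_pow_le_pow_div_pow {a b ℓ L : ℝ} {r s r' : ℕ} (ha : 1 ≤ a) (hab : a ≤ b)
    (hrs : r ≤ s) (hℓ : 1 ≤ ℓ) (hℓL : ℓ ≤ L) (hr' : r' ≤ r) :
    a ^ r / L ^ (r - 1) ≤ b ^ s / ℓ ^ (r' - 1) := by
  have hb : 1 ≤ b := ha.trans hab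
  refine div_le_div₀ (by positivity) ?_ (by positivity) ?_
  · exact (pow_le_pow_left₀ (by linarith) hab r).trans (pow_le_pow_right₀ hb hrs)
  · exact (pow_le_pow_left₀ (by linarith) hℓL _).trans' (pow_le_pow_right₀ hℓ (by omega))

lemma primePi_mono : Monotone primePi := fun _ _ h =>
  Nat.monotone_primeCounting (Nat.floor_le_floor h)

lemma primePi_le_self {x : ℝ} (hx : 0 ≤ x) : (primePi x : ℝ) ≤ x := by
  have h : Nat.primeCounting ⌊x⌋₊ ≤ ⌊x⌋₊ := by
    rw [← Nat.primesLE_card_eq_primeCounting, Nat.primesLE_eq_filter_Icc_one]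
    exact (card_filter_le _ _).trans (by simp)
  exact le_trans (by exact_mod_cast h) (Nat.floor_le hx)

lemma two_le_primePi {x : ℝ} (hx : 3 ≤ x) : 2 ≤ primePi x :=
  calc 2 = Nat.primeCounting 3 := by decide
    _ ≤ primePi x := Nat.monotone_primeCounting (Nat.le_floor (by exact_mod_cast hx))

lemma one_le_log_of_three_le {x : ℝ} (hx : 3 ≤ x) : 1 ≤ log x := by
  rw [le_log_iff_exp_le (by linarith)]
  exact (exp_one_lt_d9.trans (by norm_num)).le.trans hx

lemma primePi_mul_log_pow_le {x L : ℝ} (hL : 1 ≤ L) (hx : 3 ≤ x) (hxL : x ^ 4 ≤ L) :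
    (primePi x * log x) ^ primePi x ≤ L ^ (primePi x - 1) := by
  have hlog : 0 ≤ log x := log_nonneg (by linarith)
  calc (primePi x * log x) ^ primePi x ≤ (x ^ 2) ^ primePi x := by
        gcongr
        rw [sq]
        exact mul_le_mul (primePi_le_self (by linarith))
          ((log_le_sub_one_of_pos (by linarith)).trans (by linarith)) hlog (by linarith)
    _ ≤ L ^ (primePi x - 1) := sq_pow_le_pow_pred_of_pow_four_le hL hxL (two_le_primePi hx)

theorem exists_consecutive_sub_lt_mul {y : ℝ → ℝ} (hmono : MonotoneOn y (Set.Ioi 0))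
    {n : ℕ → ℕ} (hn : StrictMonoOn n (Set.Ici 1))
    (hnsurj : ∀ m : ℕ, 0 < m → (maxPrimeFactor m : ℝ) ≤ y m → ∃ i, 1 ≤ i ∧ n i = m)
    {X : ℝ} (hX : exp 30 < X) (hy3 : 3 ≤ y √X) (hyX : y √X ^ 4 ≤ log X) :
    ∃ i, 1 ≤ i ∧ √X < n i ∧ n i < n (i + 1) ∧ (n (i + 1) : ℝ) ≤ X ∧
      (n (i + 1) : ℝ) - n i < 3 * ((primePi (y √X) * log (y √X)) ^ primePi (y √X) /
        log X ^ (primePi (y √X) - 1)) * n i := by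
  set L := log X
  set y₀ := y √X
  set r := primePi y₀
  set w := log y₀
  have hX0 : 0 < X := (exp_pos 30).trans hX
  have hL : 30 ≤ L := ((lt_log_iff_exp_lt hX0).mpr hX).le
  have hsqrt : √X = exp (L / 2) := by rw [exp_half, exp_log hX0]
  have hw : 1 ≤ w := one_le_log_of_three_le hy3
  have hy₀ : exp w = y₀ := exp_log (by linarith)
  have hr : 2 ≤ r := two_le_primePi hy3
  obtain ⟨T, hN, hT⟩ := exists_finset_smooth_Ioc hL hw (F := ⌊y₀⌋₊)
    (Nat.le_floor (by push_cast; linarith)) (hy₀ ▸ Nat.floor_le (by linarith))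
  rw [← hsqrt, exp_log hX0] at hT
  have hTn : ∀ v ∈ T, ∃ i, 1 ≤ i ∧ n i = v := fun v hv => by
    obtain ⟨hlo, -, hsmooth⟩ := hT v hv
    have hsX : 0 < √X := by rw [hsqrt]; exact exp_pos _
    refine hnsurj v (by exact_mod_cast hsX.trans hlo) ?_
    calc (maxPrimeFactor v : ℝ) ≤ ⌊y₀⌋₊ := by exact_mod_cast hsmooth
      _ ≤ y₀ := Nat.floor_le (by linarith)
      _ ≤ y v := hmono hsX (hsX.trans hlo) hlo.le
  set D := (r * w) ^ r / L ^ (r - 1)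
  have hD0 : 0 ≤ D := by positivity
  have hD1 : D ≤ 1 :=
    div_le_one_of_le₀ (primePi_mul_log_pow_le (by linarith) hy3 hyX) (by positivity)
  have hLN : L ≤ 3 / 2 * D * #T := by
    rw [show 3 / 2 * D * #T = 3 / 2 * (r * w) ^ r * #T / L ^ (r - 1) by ring,
      le_div_iff₀ (by positivity), ← pow_succ', Nat.sub_add_cancel (by omega)]
    exact hN
  have hcard : 2 ≤ #T := by
    have : L ≤ 3 / 2 * #T := hLN.trans (by gcongr; nlinarith)
    exact_mod_cast (by linarith : (2 : ℝ) ≤ #T)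
  obtain ⟨i, hi, hlo, hlt, hhi, hgap⟩ := exists_consecutive_lt_mul_exp hn hTn
    (sqrt_pos.mpr hX0) (fun v hv => ⟨(hT v hv).1, (hT v hv).2.1⟩) hcard
  rw [log_sqrt hX0.le, show L - L / 2 = L / 2 by ring] at hgap
  refine ⟨i, hi, hlo, hlt, hhi, ?_⟩
  calc (n (i + 1) : ℝ) - n i < (exp (L / 2 / (#T - 1)) - 1) * n i := by linarith
    _ ≤ 3 * D * n i := by gcongr; exact exp_half_div_sub_one_le (by linarith) hD0 hD1 hLN

lemma primePi_mul_log_pow_div_le_of_sqrt_lt {y : ℝ → ℝ} (hmono : MonotoneOn y (Set.Ioi 0)) {X m : ℝ}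
    (hX : exp 2 ≤ X) (hy3 : 3 ≤ y √X) (hm : √X < m) (hmX : m ≤ X) :
    (primePi (y √X) * log (y √X)) ^ primePi (y √X) / log X ^ (primePi (y √X) - 1) ≤
      (primePi (y m) * log (y m)) ^ primePi (y m) / log m ^ (primePi (y √m) - 1) := by
  have hsX : 0 < √X := sqrt_pos.mpr ((exp_pos 2).trans_le hX)
  have hm0 : 0 < m := hsX.trans hm
  have hy : y √X ≤ y m := hmono hsX hm0 hm.le
  have hlogm : 1 ≤ log m := by
    have : exp 1 ≤ √X := by rw [show (1 : ℝ) = 2 / 2 by norm_num, exp_half]; gcongr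
    rw [le_log_iff_exp_le hm0]
    linarith
  refine pow_div_pow_le_pow_div_pow ?_ ?_ (primePi_mono hy) hlogm (log_le_log hm0 hmX)
    (primePi_mono (hmono (sqrt_pos.mpr hm0) hsX (sqrt_le_sqrt hmX)))
  · exact one_le_mul_of_one_le_of_one_le (by exact_mod_cast (two_le_primePi hy3).trans' one_le_two)
      (one_le_log_of_three_le hy3)
  · exact mul_le_mul (by exact_mod_cast primePi_mono hy) (log_le_log (by linarith) hy)
      (by linarith [one_le_log_of_three_le hy3]) (by positivity)

theorem stmt13 :
    ∃ c₁₄ : ℝ, 0 < c₁₄ ∧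
      ∀ y : ℝ → ℝ,
        (∀ a b : ℝ, 0 < a → a ≤ b → y a ≤ y b) →
        (∀ x : ℝ, 0 < x → 3 ≤ y x) →
        ∀ n : ℕ → ℕ,
          (∀ i j : ℕ, 1 ≤ i → i < j → n i < n j) →
          (∀ i : ℕ, 1 ≤ i → 0 < n i ∧ (maxPrimeFactor (n i) : ℝ) ≤ y (n i)) →
          (∀ m : ℕ, 0 < m → (maxPrimeFactor m : ℝ) ≤ y m → ∃ i : ℕ, 1 ≤ i ∧ n i = m) →
          ∀ X : ℝ, c₁₄ < X → y (Real.sqrt X) ≤ Real.log X ^ ((1 : ℝ) / 4) →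
            ∃ i : ℕ, 1 ≤ i ∧
              Real.sqrt X < (n i : ℝ) ∧ (n i : ℝ) ≤ X ∧
              Real.sqrt X < (n (i + 1) : ℝ) ∧ (n (i + 1) : ℝ) ≤ X ∧
              (n (i + 1) : ℝ) - (n i : ℝ) <
                3 * (n i : ℝ) *
                    ((primePi (y (n i)) : ℝ) * Real.log (y (n i))) ^ primePi (y (n i)) /
                  Real.log (n i) ^ (primePi (y (Real.sqrt (n i))) - 1) := by
  refine ⟨exp 30, exp_pos 30, fun y hmono hy3 n hinc _ hsurj X hX hyX => ?_⟩
  have hmono' : MonotoneOn y (Set.Ioi 0) := fun a ha b _ hab => hmono a b ha hab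
  have hy3X : 3 ≤ y √X := hy3 _ (sqrt_pos.mpr ((exp_pos 30).trans hX))
  have hL : 0 ≤ log X := log_nonneg (by linarith [add_one_le_exp 30])
  have hyX4 : y √X ^ 4 ≤ log X := by
    calc y √X ^ 4 ≤ (log X ^ ((4 : ℕ) : ℝ)⁻¹) ^ 4 := by
          gcongr
          simpa using hyX
      _ = log X := rpow_inv_natCast_pow hL four_ne_zero
  obtain ⟨i, hi, hlo, hlt, hhi, hgap⟩ := exists_consecutive_sub_lt_mul hmono'
    (fun i hi j _ hij => hinc i j hi hij) hsurj hX hy3X hyX4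
  have hlt' : (n i : ℝ) < n (i + 1) := by exact_mod_cast hlt
  have hbound := primePi_mul_log_pow_div_le_of_sqrt_lt hmono'
    ((exp_le_exp.mpr (by norm_num)).trans hX.le) hy3X hlo (by linarith)
  refine ⟨i, hi, hlo, by linarith, by linarith, hhi, hgap.trans_le ?_⟩
  exact (mul_le_mul_of_nonneg_right (mul_le_mul_of_nonneg_left hbound zero_le_three)
    (Nat.cast_nonneg _)).trans_eq (by ring)
end

section
/- Assume the abc conjecture: for each ε > 0 there is a positive number c(ε) such that for all pairwise coprime positive integers x, y, z with x + y = z one has z < c(ε)·G^{1+ε}, where G is the product of the distinct primes dividing xyz. Then for every ε > 0 there is a positive number c(ε) such that the following holds: if m < n are positive integers, Y ≥ 2 is a real number, and every prime factor of m and of n is at most Y, then (m/c(ε))^{1/(1+ε)} < (n − m)·∏_{p ≤ Y, p prime} p. -/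
open Real Finset

/-!
Write `d = gcd(m, n)`, `m = d x`, `n = d z` and `y = z - x`, so that `x + y = z` is a coprime
triple and `n - m = d y`. Every prime of `x z` divides `m n`, hence
`rad (x y z) ≤ y · rad (m n) ≤ y · ∏_{p ≤ Y} p`, and abc gives
`m < n = d z < d C (y ∏_{p ≤ Y} p)^{1+ε} ≤ C ((n - m) ∏_{p ≤ Y} p)^{1+ε}`,
the last step because `d ≤ d^{1+ε}`.
-/

/-- The radical of `n`: the product of the distinct primes dividing `n`. -/
def rad (n : ℕ) : ℕ := n.primeFactors.prod id

lemma rad_le_prod_of_primeFactors_subset {n : ℕ} {S : Finset ℕ} (h : n.primeFactors ⊆ S)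
    (hS : 0 ∉ S) : rad n ≤ ∏ p ∈ S, p :=
  prod_le_prod_of_subset_of_one_le' h fun _ hp _ ↦
    Nat.one_le_iff_ne_zero.mpr (ne_of_mem_of_not_mem hp hS)

lemma rad_le_rad_of_dvd {a b : ℕ} (h : a ∣ b) (hb : b ≠ 0) : rad a ≤ rad b :=
  rad_le_prod_of_primeFactors_subset (Nat.primeFactors_mono h hb) fun h0 ↦
    Nat.not_prime_zero (Nat.prime_of_mem_primeFactors h0)

lemma rad_le_self {n : ℕ} (hn : n ≠ 0) : rad n ≤ n :=
  Nat.le_of_dvd (Nat.pos_of_ne_zero hn) (Nat.prod_primeFactors_dvd n)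

lemma rad_mul_le {a b : ℕ} (ha : a ≠ 0) (hb : b ≠ 0) : rad (a * b) ≤ rad a * rad b := by
  unfold rad
  rw [Nat.primeFactors_mul ha hb, ← prod_union_inter]
  refine Nat.le_mul_of_pos_right _ (prod_pos fun p hp ↦ ?_)
  exact (Nat.prime_of_mem_primeFactors (mem_inter.mp hp).1).pos

lemma rad_le_prod_primesBelow {n N : ℕ} (hn : n ∈ N.smoothNumbers) :
    rad n ≤ ∏ p ∈ N.primesBelow, p :=
  rad_le_prod_of_primeFactors_subset (Nat.primeFactors_subset_of_mem_smoothNumbers hn)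
    fun h0 ↦ Nat.not_prime_zero (Nat.prime_of_mem_primesBelow h0)

lemma mem_smoothNumbers_floor_add_one {m : ℕ} {Y : ℝ}
    (hm : ∀ p : ℕ, p.Prime → p ∣ m → (p : ℝ) ≤ Y) : m ∈ (⌊Y⌋₊ + 1).smoothNumbers :=
  Nat.mem_smoothNumbers'.mpr fun p hp hpm ↦
    Nat.lt_succ_of_le (Nat.le_floor (hm p hp hpm))

lemma exists_coprime_triple_of_lt {m n : ℕ} (hm : 0 < m) (hmn : m < n) :
    ∃ d x y z : ℕ, 0 < d ∧ 0 < x ∧ 0 < y ∧ 0 < z ∧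
      x.Coprime y ∧ y.Coprime z ∧ x.Coprime z ∧ x + y = z ∧ m = d * x ∧ n = d * z := by
  set d := m.gcd n
  have hd : 0 < d := Nat.gcd_pos_of_pos_left n hm
  have hdm : d * (m / d) = m := Nat.mul_div_cancel' (Nat.gcd_dvd_left m n)
  have hdn : d * (n / d) = n := Nat.mul_div_cancel' (Nat.gcd_dvd_right m n)
  have hx : 0 < m / d := Nat.pos_of_ne_zero fun h ↦ by simp [h] at hdm; omega
  have hxz : m / d < n / d := by
    by_contra! h
    have := Nat.mul_le_mul_left d h
    omega
  have hcop : (m / d).Coprime (n / d) := Nat.coprime_div_gcd_div_gcd hd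
  refine ⟨d, m / d, n / d - m / d, n / d, hd, hx, by omega, by omega, ?_, ?_, hcop, by omega,
    hdm.symm, hdn.symm⟩
  · simpa [Nat.coprime_sub_self_right hxz.le] using hcop
  · simpa [Nat.coprime_self_sub_left hxz.le] using hcop

def ABCBound (ε C : ℝ) : Prop :=
  ∀ x y z : ℕ, 0 < x → 0 < y → 0 < z →
    Nat.Coprime x y → Nat.Coprime y z → Nat.Coprime x z → x + y = z →
    (z : ℝ) < C * (rad (x * y * z) : ℝ) ^ ((1 : ℝ) + ε)

theorem ABCBound.lt_mul_rpow {ε C : ℝ} (habc : ABCBound ε C) (hC : 0 ≤ C) (hε : 0 ≤ ε)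
    {m n : ℕ} (hm : 0 < m) (hmn : m < n) :
    (n : ℝ) < C * (((n - m) * rad (m * n) : ℕ) : ℝ) ^ (1 + ε) := by
  obtain ⟨d, x, y, z, hd, hx, hy, hz, hxy, hyz, hxz, hsum, rfl, rfl⟩ :=
    exists_coprime_triple_of_lt hm hmn
  have hrad : rad (x * y * z) ≤ y * rad (d * x * (d * z)) :=
    calc rad (x * y * z) = rad (y * (x * z)) := by ring_nf
      _ ≤ rad y * rad (x * z) := rad_mul_le hy.ne' (by positivity)
      _ ≤ y * rad (d * x * (d * z)) :=
        Nat.mul_le_mul (rad_le_self hy.ne')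
          (rad_le_rad_of_dvd (mul_dvd_mul (dvd_mul_left x d) (dvd_mul_left z d)) (by positivity))
  have hdiff : d * z - d * x = d * y := by rw [← hsum, mul_add, Nat.add_sub_cancel_left]
  have hd1 : (1 : ℝ) ≤ d := by exact_mod_cast hd
  set R := rad (d * x * (d * z))
  calc ((d * z : ℕ) : ℝ) = d * z := Nat.cast_mul d z
    _ < d * (C * (rad (x * y * z) : ℝ) ^ ((1 : ℝ) + ε)) :=
      mul_lt_mul_of_pos_left (habc x y z hx hy hz hxy hyz hxz hsum) (by positivity)
    _ ≤ (d : ℝ) ^ (1 + ε) * (C * ((y * R : ℕ) : ℝ) ^ (1 + ε)) := by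
      gcongr
      exact self_le_rpow_of_one_le hd1 (by linarith)
    _ = C * (((d * z - d * x) * R : ℕ) : ℝ) ^ (1 + ε) := by
      rw [hdiff, mul_assoc, Nat.cast_mul d, mul_rpow (by positivity) (by positivity)]
      ring

theorem stmt15
    (habc : ∀ ε : ℝ, 0 < ε → ∃ C : ℝ, 0 < C ∧
      ∀ x y z : ℕ, 0 < x → 0 < y → 0 < z →
        Nat.Coprime x y → Nat.Coprime y z → Nat.Coprime x z → x + y = z →
        (z : ℝ) < C * (rad (x * y * z) : ℝ) ^ ((1 : ℝ) + ε)) :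
    ∀ ε : ℝ, 0 < ε → ∃ C : ℝ, 0 < C ∧
      ∀ m n : ℕ, 0 < m → m < n →
        ∀ Y : ℝ, 2 ≤ Y →
          (∀ p : ℕ, p.Prime → p ∣ m → (p : ℝ) ≤ Y) →
          (∀ p : ℕ, p.Prime → p ∣ n → (p : ℝ) ≤ Y) →
          ((m : ℝ) / C) ^ ((1 : ℝ) / (1 + ε)) <
            ((n : ℝ) - (m : ℝ)) *
              ∏ p ∈ (Finset.range (⌊Y⌋₊ + 1)).filter Nat.Prime, (p : ℝ) := by
  intro ε hε
  obtain ⟨C, hC, hbound⟩ := habc ε hε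
  refine ⟨C, hC, fun m n hm hmn Y _ hpm hpn ↦ ?_⟩
  have hrad : rad (m * n) ≤ ∏ p ∈ (⌊Y⌋₊ + 1).primesBelow, p :=
    rad_le_prod_primesBelow (Nat.mul_mem_smoothNumbers
      (mem_smoothNumbers_floor_add_one hpm) (mem_smoothNumbers_floor_add_one hpn))
  have hnm : (0 : ℝ) ≤ n - m := sub_nonneg.mpr (by exact_mod_cast hmn.le)
  have key :
      (m : ℝ) < C * (((n : ℝ) - m) * ∏ p ∈ (⌊Y⌋₊ + 1).primesBelow, (p : ℝ)) ^ (1 + ε) :=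
    calc (m : ℝ) < n := by exact_mod_cast hmn
      _ < C * (((n - m) * rad (m * n) : ℕ) : ℝ) ^ (1 + ε) :=
        ABCBound.lt_mul_rpow hbound hC.le hε.le hm hmn
      _ ≤ _ := by
        push_cast [Nat.cast_sub hmn.le]
        gcongr
        exact (Nat.cast_le.mpr hrad).trans_eq (Nat.cast_prod _ _)
  rw [one_div, rpow_inv_lt_iff_of_pos (by positivity) (mul_nonneg hnm (by positivity))
    (by positivity), div_lt_iff₀' hC]
  exact key
end
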